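/- arXiv:0810.0111 — 3 statements merged into one kernel-verified Lean document; each statement's English description precedes it below -/
import Mathlib

section
/- Let v, w ∈ ℤ^n and let T ∈ GL_{n+1}(ℤ) satisfy T·[[1, vᵀ],[0, I_n]] = [[1, wᵀ],[0, I_n]]·T (block matrix notation, with the top-left block 1×1). Then there exists a matrix X ∈ GL_n(ℤ), depending only on T, such that v = X·w. -/
/-!
Write `T = [[a, b], [c, D]]` in blocks and `U_v = uniMat n v`. Comparing blocks of
`T · U_v = U_w · T` gives `a • v = Dᵀ w` and `c vᵀ = 0`. If `c = 0`, then `det T = a · det D`,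
so `a = ±1` and `D ∈ GL_n(ℤ)`, whence `v = (a • Dᵀ) w`. If `c ≠ 0`, then `v = 0`, so
`T = U_w · T`; since `T` is invertible, `U_w = 1` and `w = 0`, so `X = 1` works.
-/

/-- The `(n+1)×(n+1)` unipotent integer matrix `[[1, vᵀ],[0, I_n]]` whose first row is
`(1, v_1, ..., v_n)` and whose remaining rows form `(0 | I_n)`. -/
def uniMat (n : ℕ) (v : Fin n → ℤ) : Matrix (Fin 1 ⊕ Fin n) (Fin 1 ⊕ Fin n) ℤ :=
  Matrix.fromBlocks 1 (Matrix.of fun _ j => v j) 0 1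

open Matrix

theorem Matrix.det_eq_mul_det_toBlocks₂₂_of_toBlocks₂₁_eq_zero {R o : Type*} [CommRing R]
    [Fintype o] [DecidableEq o] {T : Matrix (Fin 1 ⊕ o) (Fin 1 ⊕ o) R}
    (hC : T.toBlocks₂₁ = 0) : T.det = T (.inl 0) (.inl 0) * T.toBlocks₂₂.det := by
  conv_lhs => rw [← fromBlocks_toBlocks T, hC]
  rw [det_fromBlocks_zero₂₁, det_unique]
  rfl

section uniMat

variable {n : ℕ}

theorem uniMat_eq_fromBlocks (v : Fin n → ℤ) :
    uniMat n v = fromBlocks 1 (replicateRow (Fin 1) v) 0 1 :=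
  rfl

theorem uniMat_zero : uniMat n 0 = 1 := by
  rw [uniMat_eq_fromBlocks, replicateRow_zero, fromBlocks_one]

theorem uniMat_injective : Function.Injective (uniMat n) := fun _ _ h =>
  replicateRow_injective (fromBlocks_inj.mp h).2.1

theorem eq_zero_of_uniMat_mul_eq_self {T : Matrix (Fin 1 ⊕ Fin n) (Fin 1 ⊕ Fin n) ℤ}
    (hT : IsUnit T.det) {w : Fin n → ℤ} (h : uniMat n w * T = T) : w = 0 :=
  uniMat_injective <| by rwa [uniMat_zero, ← (T.isUnit_iff_isUnit_det.mpr hT).mul_eq_right]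

theorem mul_uniMat_eq_uniMat_mul_iff (T : Matrix (Fin 1 ⊕ Fin n) (Fin 1 ⊕ Fin n) ℤ)
    (v w : Fin n → ℤ) :
    T * uniMat n v = uniMat n w * T ↔
      replicateRow (Fin 1) w * T.toBlocks₂₁ = 0 ∧
      T.toBlocks₁₁ * replicateRow (Fin 1) v = replicateRow (Fin 1) w * T.toBlocks₂₂ ∧
      T.toBlocks₂₁ * replicateRow (Fin 1) v = 0 := by
  conv_lhs => rw [← fromBlocks_toBlocks T]
  simp [uniMat_eq_fromBlocks, fromBlocks_multiply, fromBlocks_inj, add_comm _ T.toBlocks₁₂]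

variable {T : Matrix (Fin 1 ⊕ Fin n) (Fin 1 ⊕ Fin n) ℤ} {v w : Fin n → ℤ}

theorem toBlocks₂₁_eq_zero_or_eq_zero_of_mul_uniMat_eq (h : T * uniMat n v = uniMat n w * T) :
    T.toBlocks₂₁ = 0 ∨ v = 0 := by
  have hcv : vecMulVec (fun i => T.toBlocks₂₁ i 0) v = 0 := by
    ext i j
    have hCv := ((mul_uniMat_eq_uniMat_mul_iff T v w).mp h).2.2
    simpa [mul_apply, vecMulVec_apply] using congrFun₂ hCv i j
  refine (vecMulVec_eq_zero.mp hcv).imp_left fun hc => ?_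
  ext i j
  rw [Fin.eq_zero j]
  exact congrFun hc i

theorem smul_eq_vecMul_toBlocks₂₂_of_mul_uniMat_eq (h : T * uniMat n v = uniMat n w * T) :
    T (.inl 0) (.inl 0) • v = w ᵥ* T.toBlocks₂₂ := by
  have hav := ((mul_uniMat_eq_uniMat_mul_iff T v w).mp h).2.1
  rw [← replicateRow_vecMul] at hav
  ext j
  simpa [mul_apply, toBlocks₁₁] using congrFun₂ hav 0 j

end uniMat

/-- if `T ∈ GL_{n+1}(ℤ)` satisfies `T·[[1,vᵀ],[0,I_n]] = [[1,wᵀ],[0,I_n]]·T`,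
then there is `X ∈ GL_n(ℤ)`, depending only on `T`, with `v = X·w`. -/
theorem stmt_4 (n : ℕ) (T : Matrix (Fin 1 ⊕ Fin n) (Fin 1 ⊕ Fin n) ℤ)
    (hT : IsUnit T.det) :
    ∃ X : Matrix (Fin n) (Fin n) ℤ, IsUnit X.det ∧
      ∀ v w : Fin n → ℤ, T * uniMat n v = uniMat n w * T → v = X.mulVec w := by
  by_cases hC : T.toBlocks₂₁ = 0
  · set a := T (.inl 0) (.inl 0)
    rw [det_eq_mul_det_toBlocks₂₂_of_toBlocks₂₁_eq_zero hC, IsUnit.mul_iff] at hT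
    refine ⟨a • T.toBlocks₂₂ᵀ, ?_, fun v w h => ?_⟩
    · rw [det_smul, det_transpose]
      exact (hT.1.pow _).mul hT.2
    · rw [smul_mulVec, mulVec_transpose, ← smul_eq_vecMul_toBlocks₂₂_of_mul_uniMat_eq h,
        smul_smul, Int.isUnit_mul_self hT.1, one_smul]
  · refine ⟨1, by simp, fun v w h => ?_⟩
    obtain rfl := (toBlocks₂₁_eq_zero_or_eq_zero_of_mul_uniMat_eq h).resolve_left hC
    rw [uniMat_zero, mul_one] at h
    rw [eq_zero_of_uniMat_mul_eq_self hT h.symm, mulVec_zero]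
end

section
/- Every 2-cocycle ω: ℤ^n × ℤ^n → 𝕋 is cohomologous to a cocycle of the form ω_Θ(m,l) = exp(2πi⟨Θm, l⟩) for some strictly upper triangular real n×n matrix Θ; moreover, ω_Θ and ω_{Θ'} are cohomologous if and only if Θ - Θ' has integer entries. -/
/-!
The antisymmetrization `c(m, l) = ω(m, l) / ω(l, m)` of a cocycle `ω` on an abelian group is a
bicharacter that only depends on the cohomology class of `ω`. On `ℤ^n` it is determined by its
values on pairs of basis vectors, which `ω_Θ` realizes with `Θ i j = arg c(e_j, e_i) / 2π` for
`i < j`. So `ω / ω_Θ` has trivial antisymmetrization, i.e. it is symmetric; a symmetric cocycle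
defines an abelian extension of `ℤ^n` by `𝕋`, which splits because `ℤ^n` is free, and a splitting
exhibits `ω / ω_Θ` as a coboundary. Conversely, for strictly upper triangular `Θ` the value
`c(e_j, e_i) = exp(2πi Θ i j)` recovers each entry of `Θ` modulo `ℤ`.
-/

open scoped Real

/-- A (normalized) 2-cocycle on `ℤ^n` with values in the circle group `𝕋`. -/
def IsCocycle (n : ℕ) (ω : (Fin n → ℤ) → (Fin n → ℤ) → Circle) : Prop :=
  (∀ m l k : Fin n → ℤ, ω m l * ω (m + l) k = ω m (l + k) * ω l k) ∧
  (∀ m : Fin n → ℤ, ω m 0 = 1 ∧ ω 0 m = 1)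

/-- Two cocycles are cohomologous if they differ by the coboundary
`(m,l) ↦ b(m)b(l)b(m+l)⁻¹` of some `b : ℤ^n → 𝕋`. -/
def Cohomologous (n : ℕ) (ω ω' : (Fin n → ℤ) → (Fin n → ℤ) → Circle) : Prop :=
  ∃ b : (Fin n → ℤ) → Circle, ∀ m l : Fin n → ℤ,
    ω m l = ω' m l * (b m * b l * (b (m + l))⁻¹)

/-- The cocycle `ω_Θ(m,l) = exp(2πi⟨Θm, l⟩)` attached to a real matrix `Θ`. -/
noncomputable def omegaTheta (n : ℕ) (Θ : Matrix (Fin n) (Fin n) ℝ)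
    (m l : Fin n → ℤ) : Circle :=
  Circle.exp (2 * π * ∑ i, (Θ.mulVec fun j => (m j : ℝ)) i * (l i : ℝ))

/-- `Θ` is strictly upper triangular. -/
def StrictUpper (n : ℕ) (Θ : Matrix (Fin n) (Fin n) ℝ) : Prop :=
  ∀ i j : Fin n, j ≤ i → Θ i j = 0

section CommutatorForm

variable {A G : Type*} [CommGroup G]

def commutatorForm (ω : A → A → G) (m l : A) : G := ω m l / ω l m

lemma commutatorForm_swap (ω : A → A → G) (m l : A) :
    commutatorForm ω l m = (commutatorForm ω m l)⁻¹ :=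
  (inv_div _ _).symm

lemma commutatorForm_self (ω : A → A → G) (m : A) : commutatorForm ω m m = 1 :=
  div_self' _

lemma commutatorForm_div (ω ω' : A → A → G) (m l : A) :
    commutatorForm (fun m l => ω m l / ω' m l) m l =
      commutatorForm ω m l / commutatorForm ω' m l :=
  div_div_div_comm _ _ _ _

variable [AddCommGroup A]

lemma commutatorForm_add_right {ω : A → A → G}
    (hω : ∀ m l k, ω m l * ω (m + l) k = ω m (l + k) * ω l k) (m l k : A) :
    commutatorForm ω m (l + k) = commutatorForm ω m l * commutatorForm ω m k := by
  have h₁ := congrArg Additive.ofMul (hω m l k)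
  have h₂ := congrArg Additive.ofMul (hω l k m)
  have h₃ := congrArg Additive.ofMul (hω l m k)
  rw [add_comm l m, add_comm m k] at h₃
  apply Additive.ofMul.injective
  simp only [commutatorForm, ofMul_mul, ofMul_div] at h₁ h₂ h₃ ⊢
  linear_combination (norm := abel) h₃ - h₁ - h₂

lemma commutatorForm_add_left {ω : A → A → G}
    (hω : ∀ m l k, ω m l * ω (m + l) k = ω m (l + k) * ω l k) (m l k : A) :
    commutatorForm ω (m + l) k = commutatorForm ω m k * commutatorForm ω l k := by
  rw [commutatorForm_swap ω k, commutatorForm_swap ω k m, commutatorForm_swap ω k l,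
    commutatorForm_add_right hω, mul_inv]

lemma commutatorForm_eq_of_coboundary {ω ω' : A → A → G} {b : A → G}
    (h : ∀ m l, ω m l = ω' m l * (b m * b l * (b (m + l))⁻¹)) (m l : A) :
    commutatorForm ω m l = commutatorForm ω' m l := by
  simp only [commutatorForm, h, add_comm l m, mul_comm (b l)]
  exact mul_div_mul_right_eq_div _ _ _

end CommutatorForm

section FreeAbelian

variable {ι G : Type*} [Finite ι] [DecidableEq ι] [CommGroup G]

lemma eq_one_of_map_add_of_single {f : (ι → ℤ) → G} (hf : ∀ a b, f (a + b) = f a * f b)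
    (h : ∀ i, f (Pi.single i 1) = 1) (m : ι → ℤ) : f m = 1 := by
  let F : (ι → ℤ) →+ Additive G := AddMonoidHom.mk' (fun m => Additive.ofMul (f m)) hf
  have hF : F = 0 := by
    ext i
    exact congrArg Additive.ofMul (h i)
  exact congrArg Additive.toMul (DFunLike.congr_fun hF m)

lemma symm_of_commutatorForm_single {ω : (ι → ℤ) → (ι → ℤ) → G}
    (hω : ∀ m l k, ω m l * ω (m + l) k = ω m (l + k) * ω l k)
    (h : ∀ i j, commutatorForm ω (Pi.single i 1) (Pi.single j 1) = 1) (m l : ι → ℤ) :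
    ω m l = ω l m := by
  have h_single : ∀ i l, commutatorForm ω (Pi.single i 1) l = 1 := fun i =>
    eq_one_of_map_add_of_single (commutatorForm_add_right hω _) (h i)
  exact div_eq_one.mp <| eq_one_of_map_add_of_single (f := (commutatorForm ω · l))
    (fun a b => commutatorForm_add_left hω a b l) (h_single · l) m

end FreeAbelian

structure SymmCocycle (A G : Type*) [AddCommGroup A] [CommGroup G] where
  toFun : A → A → G
  cocycle : ∀ m l k, toFun m l * toFun (m + l) k = toFun m (l + k) * toFun l k
  map_zero_right : ∀ m, toFun m 0 = 1
  map_zero_left : ∀ m, toFun 0 m = 1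
  symm : ∀ m l, toFun m l = toFun l m

namespace SymmCocycle

variable {A G : Type*} [AddCommGroup A] [CommGroup G]

@[ext]
structure Extension (c : SymmCocycle A G) where
  z : G
  v : A

variable {c : SymmCocycle A G}

namespace Extension

instance : Mul c.Extension := ⟨fun x y => ⟨x.z * y.z * c.toFun x.v y.v, x.v + y.v⟩⟩
instance : One c.Extension := ⟨⟨1, 0⟩⟩
instance : Inv c.Extension := ⟨fun x => ⟨(x.z * c.toFun x.v (-x.v))⁻¹, -x.v⟩⟩

@[simp] lemma mul_z (x y : c.Extension) : (x * y).z = x.z * y.z * c.toFun x.v y.v := rfl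
@[simp] lemma mul_v (x y : c.Extension) : (x * y).v = x.v + y.v := rfl
@[simp] lemma one_z : (1 : c.Extension).z = 1 := rfl
@[simp] lemma one_v : (1 : c.Extension).v = 0 := rfl
@[simp] lemma inv_z (x : c.Extension) : x⁻¹.z = (x.z * c.toFun x.v (-x.v))⁻¹ := rfl
@[simp] lemma inv_v (x : c.Extension) : x⁻¹.v = -x.v := rfl

instance : CommGroup c.Extension where
  mul_assoc x y w := by
    ext
    · simp only [mul_z, mul_v]
      calc x.z * y.z * c.toFun x.v y.v * w.z * c.toFun (x.v + y.v) w.v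
          = x.z * y.z * w.z * (c.toFun x.v y.v * c.toFun (x.v + y.v) w.v) := by ac_rfl
        _ = x.z * y.z * w.z * (c.toFun x.v (y.v + w.v) * c.toFun y.v w.v) := by rw [c.cocycle]
        _ = x.z * (y.z * w.z * c.toFun y.v w.v) * c.toFun x.v (y.v + w.v) := by ac_rfl
    · exact add_assoc _ _ _
  one_mul x := by ext <;> simp [c.map_zero_left]
  mul_one x := by ext <;> simp [c.map_zero_right]
  inv_mul_cancel x := by ext <;> simp [c.symm (-x.v) x.v]
  mul_comm x y := by ext <;> simp [c.symm x.v, mul_comm x.z, add_comm x.v]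

def proj : c.Extension →* Multiplicative A where
  toFun x := .ofAdd x.v
  map_one' := rfl
  map_mul' _ _ := rfl

end Extension

lemma exists_coboundary_of_section (s : A → c.Extension) (hs_v : ∀ m, (s m).v = m)
    (hs_add : ∀ m l, s (m + l) = s m * s l) :
    ∃ b : A → G, ∀ m l, c.toFun m l = b m * b l * (b (m + l))⁻¹ := by
  refine ⟨fun m => (s m).z⁻¹, fun m l => ?_⟩
  simp only [hs_add, Extension.mul_z, hs_v]
  rw [inv_inv, ← mul_inv, inv_mul_cancel_left]

lemma exists_coboundary {ι : Type*} [Fintype ι] [DecidableEq ι] (c : SymmCocycle (ι → ℤ) G) :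
    ∃ b : (ι → ℤ) → G, ∀ m l, c.toFun m l = b m * b l * (b (m + l))⁻¹ := by
  let s (m : ι → ℤ) : c.Extension := ∏ i, (⟨1, Pi.single i 1⟩ : c.Extension) ^ m i
  refine exists_coboundary_of_section s (fun m => ?_) (fun m l => ?_)
  · apply Multiplicative.ofAdd.injective
    change Extension.proj (s m) = _
    simp only [s, map_prod, map_zpow]
    change ∏ i, Multiplicative.ofAdd (Pi.single i (1 : ℤ)) ^ m i = _
    simp only [← ofAdd_zsmul, ← ofAdd_sum, ← Pi.single_smul', smul_eq_mul, mul_one,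
      Finset.univ_sum_single]
  · simp only [s, Pi.add_apply, zpow_add, Finset.prod_mul_distrib]

end SymmCocycle

section OmegaTheta

variable {n : ℕ}

lemma omegaTheta_add_left (Θ : Matrix (Fin n) (Fin n) ℝ) (m l k : Fin n → ℤ) :
    omegaTheta n Θ (m + l) k = omegaTheta n Θ m k * omegaTheta n Θ l k := by
  have hcast : (fun j => ((m + l) j : ℝ)) = (fun j => (m j : ℝ)) + fun j => (l j : ℝ) := by
    ext j; simp
  rw [omegaTheta, hcast, Matrix.mulVec_add]
  simp only [omegaTheta, ← Circle.exp_add, Pi.add_apply, add_mul, Finset.sum_add_distrib, mul_add]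

lemma omegaTheta_add_right (Θ : Matrix (Fin n) (Fin n) ℝ) (m l k : Fin n → ℤ) :
    omegaTheta n Θ m (l + k) = omegaTheta n Θ m l * omegaTheta n Θ m k := by
  simp only [omegaTheta, ← Circle.exp_add, Pi.add_apply, Int.cast_add, mul_add,
    Finset.sum_add_distrib]

lemma omegaTheta_zero_left (Θ : Matrix (Fin n) (Fin n) ℝ) (m : Fin n → ℤ) :
    omegaTheta n Θ 0 m = 1 := by
  simp [omegaTheta, ← Pi.zero_def]

lemma omegaTheta_zero_right (Θ : Matrix (Fin n) (Fin n) ℝ) (m : Fin n → ℤ) :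
    omegaTheta n Θ m 0 = 1 := by
  simp [omegaTheta]

lemma omegaTheta_single (Θ : Matrix (Fin n) (Fin n) ℝ) (a b : Fin n) :
    omegaTheta n Θ (Pi.single a 1) (Pi.single b 1) = Circle.exp (2 * π * Θ b a) := by
  have hcast : (fun j => ((Pi.single a 1 : Fin n → ℤ) j : ℝ)) = Pi.single a 1 := by
    ext j; by_cases h : j = a <;> simp [h]
  rw [omegaTheta, hcast, Matrix.mulVec_single_one]
  simp [Pi.single_apply]

lemma omegaTheta_eq_of_sub_eq_int {Θ Θ' : Matrix (Fin n) (Fin n) ℝ} (K : Matrix (Fin n) (Fin n) ℤ)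
    (hK : ∀ i j, Θ i j - Θ' i j = K i j) : omegaTheta n Θ = omegaTheta n Θ' := by
  ext m l : 2
  have hΘ : Θ = Θ' + K.map (↑) := by ext i j; simp [← hK]
  have hint : ∑ i, ((K.map ((↑) : ℤ → ℝ)).mulVec fun j => (m j : ℝ)) i * (l i : ℝ)
      = ((∑ i, K.mulVec m i * l i : ℤ) : ℝ) := by
    simp [Matrix.mulVec, dotProduct]
  rw [omegaTheta, omegaTheta, hΘ, Matrix.add_mulVec]
  simp only [Pi.add_apply, add_mul, Finset.sum_add_distrib, hint, mul_add, Circle.exp_add,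
    Circle.exp_two_pi_mul_int, mul_one]

lemma isCocycle_omegaTheta (Θ : Matrix (Fin n) (Fin n) ℝ) : IsCocycle n (omegaTheta n Θ) :=
  ⟨fun m l k => by simp only [omegaTheta_add_left, omegaTheta_add_right, mul_assoc],
    fun m => ⟨omegaTheta_zero_right Θ m, omegaTheta_zero_left Θ m⟩⟩

lemma commutatorForm_omegaTheta_single (Θ : Matrix (Fin n) (Fin n) ℝ) (a b : Fin n) :
    commutatorForm (omegaTheta n Θ) (Pi.single a 1) (Pi.single b 1) =
      Circle.exp (2 * π * (Θ b a - Θ a b)) := by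
  rw [commutatorForm, omegaTheta_single, omegaTheta_single, mul_sub, Circle.exp_sub]

lemma StrictUpper.commutatorForm_omegaTheta_single {Θ : Matrix (Fin n) (Fin n) ℝ}
    (hΘ : StrictUpper n Θ) {i j : Fin n} (hij : i < j) :
    commutatorForm (omegaTheta n Θ) (Pi.single j 1) (Pi.single i 1) =
      Circle.exp (2 * π * Θ i j) := by
  rw [_root_.commutatorForm_omegaTheta_single, hΘ j i hij.le, sub_zero]

lemma exists_int_sub_eq_of_exp_two_pi_mul_eq {x y : ℝ}
    (h : Circle.exp (2 * π * x) = Circle.exp (2 * π * y)) : ∃ k : ℤ, x - y = k := by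
  obtain ⟨k, hk⟩ := Circle.exp_eq_exp.mp h
  exact ⟨k, mul_left_cancel₀ (by positivity : (2 * π : ℝ) ≠ 0) (by rw [mul_sub]; linarith)⟩

noncomputable def thetaOf (ω : (Fin n → ℤ) → (Fin n → ℤ) → Circle) :
    Matrix (Fin n) (Fin n) ℝ := fun i j =>
  if i < j then Complex.arg (commutatorForm ω (Pi.single j 1) (Pi.single i 1) : Circle) / (2 * π)
  else 0

lemma strictUpper_thetaOf (ω : (Fin n → ℤ) → (Fin n → ℤ) → Circle) :
    StrictUpper n (thetaOf ω) :=
  fun _ _ hji => if_neg hji.not_gt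

lemma commutatorForm_omegaTheta_thetaOf (ω : (Fin n → ℤ) → (Fin n → ℤ) → Circle) (a b : Fin n) :
    commutatorForm (omegaTheta n (thetaOf ω)) (Pi.single a 1) (Pi.single b 1) =
      commutatorForm ω (Pi.single a 1) (Pi.single b 1) := by
  have h_lt : ∀ i j, i < j → commutatorForm (omegaTheta n (thetaOf ω)) (Pi.single j 1)
      (Pi.single i 1) = commutatorForm ω (Pi.single j 1) (Pi.single i 1) := fun i j hij => by
    rw [(strictUpper_thetaOf ω).commutatorForm_omegaTheta_single hij, thetaOf, if_pos hij,
      mul_div_cancel₀ _ (by positivity), Circle.exp_arg]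
  rcases lt_trichotomy a b with hab | rfl | hab
  · rw [commutatorForm_swap, h_lt a b hab, ← commutatorForm_swap]
  · simp only [commutatorForm_self]
  · exact h_lt b a hab

theorem cohomologous_of_commutatorForm_single_eq {ω ω' : (Fin n → ℤ) → (Fin n → ℤ) → Circle}
    (hω : IsCocycle n ω) (hω' : IsCocycle n ω')
    (h : ∀ i j, commutatorForm ω (Pi.single i 1) (Pi.single j 1) =
      commutatorForm ω' (Pi.single i 1) (Pi.single j 1)) :
    Cohomologous n ω ω' := by
  have hc : ∀ m l k, ω m l / ω' m l * (ω (m + l) k / ω' (m + l) k) =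
      ω m (l + k) / ω' m (l + k) * (ω l k / ω' l k) := fun m l k => by
    simp only [div_mul_div_comm, hω.1, hω'.1]
  let c : SymmCocycle (Fin n → ℤ) Circle :=
    { toFun := fun m l => ω m l / ω' m l
      cocycle := hc
      map_zero_right := fun m => by simp only [(hω.2 m).1, (hω'.2 m).1, div_one]
      map_zero_left := fun m => by simp only [(hω.2 m).2, (hω'.2 m).2, div_one]
      symm := symm_of_commutatorForm_single hc fun i j => by
        rw [commutatorForm_div, h, div_self'] }
  obtain ⟨b, hb⟩ := c.exists_coboundary
  exact ⟨b, fun m l => by rw [← hb]; exact (mul_div_cancel _ _).symm⟩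

end OmegaTheta

/-- every `𝕋`-valued 2-cocycle on `ℤ^n` is cohomologous to one of the form
`ω_Θ(m,l) = exp(2πi⟨Θm,l⟩)` with `Θ` strictly upper triangular; and `ω_Θ`, `ω_{Θ'}` are
cohomologous iff `Θ - Θ'` has integer entries. -/
theorem stmt_12 (n : ℕ) :
    (∀ ω : (Fin n → ℤ) → (Fin n → ℤ) → Circle, IsCocycle n ω →
      ∃ Θ : Matrix (Fin n) (Fin n) ℝ, StrictUpper n Θ ∧
        Cohomologous n ω (omegaTheta n Θ)) ∧
    (∀ Θ Θ' : Matrix (Fin n) (Fin n) ℝ, StrictUpper n Θ → StrictUpper n Θ' →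
      (Cohomologous n (omegaTheta n Θ) (omegaTheta n Θ') ↔
        ∀ i j : Fin n, ∃ k : ℤ, Θ i j - Θ' i j = (k : ℝ))) := by
  refine ⟨fun ω hω => ⟨thetaOf ω, strictUpper_thetaOf ω, ?_⟩, fun Θ Θ' hΘ hΘ' => ⟨?_, ?_⟩⟩
  · exact cohomologous_of_commutatorForm_single_eq hω (isCocycle_omegaTheta _)
      fun i j => (commutatorForm_omegaTheta_thetaOf ω i j).symm
  · rintro ⟨b, hb⟩ i j
    rcases lt_or_ge i j with hij | hji
    · have h := commutatorForm_eq_of_coboundary hb (Pi.single j 1) (Pi.single i 1)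
      rw [hΘ.commutatorForm_omegaTheta_single hij,
        hΘ'.commutatorForm_omegaTheta_single hij] at h
      exact exists_int_sub_eq_of_exp_two_pi_mul_eq h
    · exact ⟨0, by rw [hΘ i j hji, hΘ' i j hji, sub_zero, Int.cast_zero]⟩
  · intro h
    choose K hK using h
    exact ⟨1, fun m l => by rw [omegaTheta_eq_of_sub_eq_int K hK]; simp⟩
end

section
/- Let X be a compact Hausdorff space, A a unital C*-algebra containing C(X) in its center (making A a C(X)-algebra), and B ⊆ A a closed C(X)-invariant *-subalgebra such that for every x ∈ X the images of B and A in the fibre A_x = A/(C₀(X∖{x})·A) coincide. Then B = A. -/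
/-! Write `d(x)` for the image of `d` in the fibre `A_x`. Two estimates on fibre norms drive the
proof: `‖d‖ ≤ sup_x ‖d(x)‖`, by Gelfand theory for the commutative Banach algebra generated by
`Φ(C(X))` and `d⋆d`, whose characters restrict to points of `X`; and
`‖(∑ pᵢ cᵢ)(x)‖ ≤ ∑ pᵢ(x) ‖cᵢ(x)‖` for a partition of unity `pᵢ`, by continuity of the `pᵢ`.
Given `a`, pick `b_x ∈ B` with `(a - b_x)(x) = 0`; by upper semicontinuity of fibre norms,
`a - b_x` is small in the fibres near `x`, and patching with a subordinate partition of unity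
gives `∑ pᵢ b_{xᵢ} ∈ B` arbitrarily close to `a`. -/

section

open Filter Topology Set

variable {X A : Type*} [TopologicalSpace X]

open scoped IsMulCommutative in
theorem exists_forall_norm_apply_mul_le_norm_mul [CompactSpace X] [T2Space X]
    [NormedRing A] [NormedAlgebra ℂ A] [CompleteSpace A] [NormOneClass A]
    (Φ : C(X, ℂ) →ₐ[ℂ] A) {t : A} (ht : ∀ f, Commute (Φ f) t) {z : ℂ}
    (hz : z ∈ spectrum ℂ t) : ∃ x : X, ∀ g : C(X, ℂ), ‖g x * z‖ ≤ ‖Φ g * t‖ := by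
  -- On `Φ(C(X))`, a character of the commutative double centralizer of `{t} ∪ Φ(C(X))` is
  -- evaluation at a point of `X`.
  set S : Set A := insert t (range Φ)
  have hS : ∀ a ∈ S, ∀ b ∈ S, a * b = b * a := by
    rintro _ (rfl | ⟨f, rfl⟩) _ (rfl | ⟨f', rfl⟩)
    exacts [rfl, (ht f').symm.eq, (ht f).eq, by rw [← map_mul, mul_comm, map_mul]]
  set C := Subalgebra.centralizer ℂ (Subalgebra.centralizer ℂ S : Set A)
  have hSC : S ⊆ C := Set.subset_centralizer_centralizer
  have : IsMulCommutative C := .of_setLike_mul_comm fun a ha b hb =>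
    Set.centralizer_centralizer_comm_of_comm hS a ha b hb
  let _ : NormedCommRing C := { mul_comm := mul_comm }
  have : CompleteSpace C := (Set.isClosed_centralizer _).completeSpace_coe
  have : NormOneClass C := ⟨norm_one (α := A)⟩
  let tC : C := ⟨t, hSC (mem_insert _ _)⟩
  obtain ⟨φ, hφ⟩ :=
    WeakDual.CharacterSpace.mem_spectrum_iff_exists.mp (spectrum.subset_subalgebra tC hz)
  let Φ' : C(X, ℂ) →ₐ[ℂ] C := Φ.codRestrict C fun f => hSC (mem_insert_of_mem _ ⟨f, rfl⟩)
  let ψ := WeakDual.CharacterSpace.equivAlgHom.symm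
    ((WeakDual.CharacterSpace.equivAlgHom φ).comp Φ')
  refine ⟨(WeakDual.CharacterSpace.homeoEval X ℂ).symm ψ, fun g => ?_⟩
  have hx : φ (Φ' g) = g ((WeakDual.CharacterSpace.homeoEval X ℂ).symm ψ) :=
    congr($((WeakDual.CharacterSpace.homeoEval X ℂ).apply_symm_apply ψ) g).symm
  calc ‖g _ * z‖ = ‖φ (Φ' g * tC)‖ := by rw [map_mul, hx, hφ]
    _ ≤ ‖Φ' g * tC‖ := spectrum.norm_le_norm_of_mem (AlgHom.apply_mem_spectrum φ _)
    _ = ‖Φ g * t‖ := rfl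

theorem exists_complex_bump [CompactSpace X] [T2Space X] {x : X} {U : Set X} (hU : U ∈ 𝓝 x) :
    ∃ g : C(X, ℂ), ‖g‖ ≤ 1 ∧ Function.support g ⊆ U ∧ g x = 1 := by
  obtain ⟨f, hfx, hfU, -, hf01⟩ := exists_continuous_one_zero_of_isCompact isCompact_singleton
    isOpen_interior.isClosed_compl (disjoint_compl_right_iff_subset.2
      (singleton_subset_iff.2 (mem_interior_iff_mem_nhds.2 hU)))
  refine ⟨f.realToRCLike ℂ, ?_, fun y hy => ?_, by simp [hfx rfl]⟩
  · refine (ContinuousMap.norm_le _ zero_le_one).2 fun y => ?_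
    simpa [abs_le] using ⟨(hf01 y).1.trans' (by norm_num), (hf01 y).2⟩
  · by_contra hyU
    exact hy (by simp [hfU (fun h => hyU (interior_subset h))])

section LocalNorm

variable [CompactSpace X] [CStarAlgebra A] (Φ : C(X, ℂ) →⋆ₐ[ℂ] A)

def LocalNormLE (U : Set X) (d : A) (M : ℝ) : Prop :=
  ∀ g : C(X, ℂ), ‖g‖ ≤ 1 → Function.support g ⊆ U → ‖Φ g * d‖ ≤ M

/-- A stand-in for `‖d(x)‖ ≤ M` in the fibre `A_x`, which avoids forming the quotient. -/
def NormLENear (x : X) (d : A) (M : ℝ) : Prop :=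
  ∀ᶠ U in (𝓝 x).smallSets, LocalNormLE Φ U d M

variable {Φ} {U V : Set X} {x : X} {d e : A} {M N : ℝ}

theorem LocalNormLE.anti (h : LocalNormLE Φ U d M) (hVU : V ⊆ U) : LocalNormLE Φ V d M :=
  fun g hg hgV => h g hg (hgV.trans hVU)

theorem LocalNormLE.mono (h : LocalNormLE Φ U d M) (hMN : M ≤ N) : LocalNormLE Φ U d N :=
  fun g hg hgU => (h g hg hgU).trans hMN

theorem localNormLE_of_norm_le (h : ‖d‖ ≤ M) : LocalNormLE Φ U d M := fun g hg _ =>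
  calc ‖Φ g * d‖ ≤ ‖Φ g‖ * ‖d‖ := norm_mul_le _ _
    _ ≤ 1 * M := by gcongr; exact (NonUnitalStarAlgHom.norm_apply_le Φ g).trans hg
    _ = M := one_mul M

theorem LocalNormLE.add (hd : LocalNormLE Φ U d M) (he : LocalNormLE Φ U e N) :
    LocalNormLE Φ U (d + e) (M + N) := fun g hg hgU =>
  calc ‖Φ g * (d + e)‖ ≤ ‖Φ g * d‖ + ‖Φ g * e‖ := by rw [mul_add]; exact norm_add_le _ _
    _ ≤ M + N := add_le_add (hd g hg hgU) (he g hg hgU)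

theorem LocalNormLE.sum {ι : Type*} {s : Finset ι} {d : ι → A} {M : ι → ℝ}
    (h : ∀ i ∈ s, LocalNormLE Φ U (d i) (M i)) :
    LocalNormLE Φ U (∑ i ∈ s, d i) (∑ i ∈ s, M i) := fun g hg hgU =>
  calc ‖Φ g * ∑ i ∈ s, d i‖ ≤ ∑ i ∈ s, ‖Φ g * d i‖ := by
        rw [Finset.mul_sum]; exact norm_sum_le _ _
    _ ≤ ∑ i ∈ s, M i := Finset.sum_le_sum fun i hi => h i hi g hg hgU

theorem LocalNormLE.smul (h : LocalNormLE Φ U d M) (c : ℂ) :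
    LocalNormLE Φ U (c • d) (‖c‖ * M) := fun g hg hgU => by
  rw [mul_smul_comm, norm_smul]
  exact mul_le_mul_of_nonneg_left (h g hg hgU) (norm_nonneg c)

theorem LocalNormLE.mul_of_forall_norm_sub_le (hd : LocalNormLE Φ U d M) {h : C(X, ℂ)}
    {c : ℂ} {η : ℝ} (hη : 0 ≤ η) (hh : ∀ y ∈ U, ‖h y - c‖ ≤ η) :
    LocalNormLE Φ U (Φ h * d) (‖c‖ * M + η * ‖d‖) := by
  intro g hg hgU
  have hgh : ‖g * (h - algebraMap ℂ C(X, ℂ) c)‖ ≤ η := by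
    refine (ContinuousMap.norm_le _ hη).2 fun y => ?_
    by_cases hy : y ∈ U
    · calc ‖g y * (h y - c)‖ = ‖g y‖ * ‖h y - c‖ := norm_mul _ _
        _ ≤ 1 * η := mul_le_mul ((g.norm_coe_le_norm y).trans hg) (hh y hy)
            (norm_nonneg _) zero_le_one
        _ = η := one_mul η
    · simpa [Function.notMem_support.1 fun hy' => hy (hgU hy')] using hη
  have hsplit : Φ g * (Φ h * d) = c • (Φ g * d) + Φ (g * (h - algebraMap ℂ C(X, ℂ) c)) * d := by
    rw [mul_sub, map_sub, map_mul, map_mul, AlgHomClass.commutes, Algebra.algebraMap_eq_smul_one,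
      mul_smul_comm, mul_one, sub_mul, smul_mul_assoc, mul_assoc]
    abel
  calc ‖Φ g * (Φ h * d)‖ ≤ ‖c • (Φ g * d)‖ + ‖Φ (g * (h - algebraMap ℂ C(X, ℂ) c)) * d‖ := by
        rw [hsplit]; exact norm_add_le _ _
    _ ≤ ‖c‖ * M + η * ‖d‖ := by
        rw [norm_smul]
        gcongr
        · exact hd g hg hgU
        · refine (norm_mul_le _ _).trans ?_
          gcongr
          exact (NonUnitalStarAlgHom.norm_apply_le Φ _).trans hgh

theorem LocalNormLE.normLENear (h : LocalNormLE Φ U d M) (hU : U ∈ 𝓝 x) : NormLENear Φ x d M :=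
  (eventually_smallSets_subset.2 hU).mono fun _ hVU => h.anti hVU

theorem normLENear_of_norm_le (h : ‖d‖ ≤ M) : NormLENear Φ x d M :=
  Eventually.of_forall fun _ => localNormLE_of_norm_le h

theorem NormLENear.mono (h : NormLENear Φ x d M) (hMN : M ≤ N) : NormLENear Φ x d N :=
  Eventually.mono h fun _ hU => hU.mono hMN

theorem NormLENear.add (hd : NormLENear Φ x d M) (he : NormLENear Φ x e N) :
    NormLENear Φ x (d + e) (M + N) :=
  (hd.and he).mono fun _ hU => hU.1.add hU.2

theorem NormLENear.sum {ι : Type*} {s : Finset ι} {d : ι → A} {M : ι → ℝ}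
    (h : ∀ i ∈ s, NormLENear Φ x (d i) (M i)) :
    NormLENear Φ x (∑ i ∈ s, d i) (∑ i ∈ s, M i) :=
  ((eventually_all_finset s).2 h).mono fun _ hU => LocalNormLE.sum hU

theorem NormLENear.smul (h : NormLENear Φ x d M) (c : ℂ) :
    NormLENear Φ x (c • d) (‖c‖ * M) :=
  Eventually.mono h fun _ hU => hU.smul c

theorem NormLENear.mul (hd : NormLENear Φ x d M) (h : C(X, ℂ)) {η : ℝ} (hη : 0 < η) :
    NormLENear Φ x (Φ h * d) (‖h x‖ * M + η) := by
  have hη' : 0 < η / (‖d‖ + 1) := by positivity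
  have hnear : {y | ‖h y - h x‖ < η / (‖d‖ + 1)} ∈ 𝓝 x :=
    (isOpen_lt (h.continuous.sub continuous_const).norm continuous_const).mem_nhds
      (by simpa using hη')
  filter_upwards [hd, eventually_smallSets_subset.2 hnear] with U hU hUnear
  refine (hU.mul_of_forall_norm_sub_le hη'.le fun y hy => (hUnear hy).le).mono ?_
  gcongr
  rw [div_mul_eq_mul_div, div_le_iff₀ (by positivity)]
  nlinarith [norm_nonneg d]

theorem NormLENear.mul_of_notMem_tsupport {h : C(X, ℂ)} (hx : x ∉ tsupport h) :
    NormLENear Φ x (Φ h * d) 0 := by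
  have hU : LocalNormLE Φ (tsupport h)ᶜ (Φ h * d) 0 := by
    simpa using LocalNormLE.mul_of_forall_norm_sub_le (c := 0)
      (localNormLE_of_norm_le (Φ := Φ) le_rfl) le_rfl
      fun y hy => by simp [image_eq_zero_of_notMem_tsupport hy]
  exact hU.normLENear ((isClosed_tsupport h).isOpen_compl.mem_nhds hx)

variable (Φ) in
/-- The kernel of `A → A_x`. -/
def vanishingSubmodule (x : X) : Submodule ℂ A where
  carrier := {d | ∀ ε > 0, NormLENear Φ x d ε}
  zero_mem' ε hε := normLENear_of_norm_le (by simpa using hε.le)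
  add_mem' hd he ε hε := by
    simpa using (hd (ε / 2) (by positivity)).add (he (ε / 2) (by positivity))
  smul_mem' c d hd ε hε := by
    simpa [mul_div_cancel₀ _ (by positivity : ‖c‖ + 1 ≠ 0)] using
      ((hd (ε / (‖c‖ + 1)) (by positivity)).smul c).mono
        (show ‖c‖ * (ε / (‖c‖ + 1)) ≤ ε by
          rw [mul_div_assoc', div_le_iff₀ (by positivity)]; nlinarith [norm_nonneg c])

theorem isClosed_vanishingSubmodule (x : X) : IsClosed (vanishingSubmodule Φ x : Set A) := by
  refine isClosed_of_closure_subset fun d hd ε hε => ?_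
  obtain ⟨s, hs, hds⟩ := Metric.mem_closure_iff.1 hd (ε / 2) (by positivity)
  have hnear : NormLENear Φ x (d - s) (ε / 2) :=
    normLENear_of_norm_le (by rw [← dist_eq_norm]; exact hds.le)
  simpa using hnear.add (hs (ε / 2) (by positivity))

theorem mul_mem_vanishingSubmodule {f : C(X, ℂ)} (hf : f x = 0) (a : A) :
    Φ f * a ∈ vanishingSubmodule Φ x := fun ε hε => by
  simpa [hf] using (normLENear_of_norm_le (Φ := Φ) (x := x) le_rfl).mul f hε

theorem closure_span_le_vanishingSubmodule (x : X) :
    closure (Submodule.span ℂ {z : A | ∃ (f : C(X, ℂ)) (a : A), f x = 0 ∧ z = Φ f * a} : Set A)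
      ⊆ vanishingSubmodule Φ x :=
  closure_minimal
    (Submodule.span_le.2 fun _ ⟨_, a, hf, hz⟩ => hz ▸ mul_mem_vanishingSubmodule hf a)
    (isClosed_vanishingSubmodule x)

theorem norm_le_of_forall_normLENear [T2Space X] (hΦ : ∀ f a, Commute (Φ f) a) (hM : 0 ≤ M)
    (h : ∀ x, NormLENear Φ x d M) : ‖d‖ ≤ M := by
  rcases subsingleton_or_nontrivial A with hA | hA
  · rwa [Subsingleton.elim d 0, norm_zero]
  obtain ⟨z, hz, hzd⟩ := spectrum.exists_nnnorm_eq_spectralRadius (star d * d)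
  rw [(IsSelfAdjoint.star_mul_self d).spectralRadius_eq_nnnorm, ENNReal.coe_inj] at hzd
  obtain ⟨x, hx⟩ :=
    exists_forall_norm_apply_mul_le_norm_mul (Φ : C(X, ℂ) →ₐ[ℂ] A) (fun f => hΦ f _) hz
  obtain ⟨U, hU, hUd⟩ := eventually_smallSets.1 (h x)
  obtain ⟨g, hg, hgU, hgx⟩ := exists_complex_bump hU
  have hgd : Φ (star g * g) * (star d * d) = star (Φ g * d) * (Φ g * d) := by
    rw [(hΦ _ _).left_comm, map_mul, map_star, star_mul, mul_assoc, mul_assoc]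
  have hsq : ‖d‖ * ‖d‖ ≤ M * M :=
    calc ‖d‖ * ‖d‖ = ‖z‖ := by
          rw [← CStarRing.norm_star_mul_self, ← coe_nnnorm, ← hzd, coe_nnnorm]
      _ = ‖(star g * g) x * z‖ := by simp [hgx]
      _ ≤ ‖Φ (star g * g) * (star d * d)‖ := hx _
      _ = ‖Φ g * d‖ * ‖Φ g * d‖ := by rw [hgd, CStarRing.norm_star_mul_self]
      _ ≤ M * M := mul_self_le_mul_self (norm_nonneg _) (hUd U subset_rfl g hg hgU)
  exact (mul_self_le_mul_self_iff (norm_nonneg d) hM).2 hsq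

theorem norm_sum_partition_mul_le [T2Space X] (hΦ : ∀ f a, Commute (Φ f) a) {ι : Type*}
    [Fintype ι] {p : ι → C(X, ℝ)} (hp0 : ∀ i, 0 ≤ p i) (hp1 : ∑ i, p i = 1) {c : ι → A} (hM : 0 ≤ M)
    (hc : ∀ i, ∀ x ∈ tsupport (p i), NormLENear Φ x (c i) M) :
    ‖∑ i, Φ ((p i).realToRCLike ℂ) * c i‖ ≤ M := by
  refine le_of_forall_pos_le_add fun η hη =>
    norm_le_of_forall_normLENear hΦ (by positivity) fun x => ?_
  set η' := η / (Fintype.card ι + 1)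
  have hη' : 0 < η' := by positivity
  have hterm : ∀ i, NormLENear Φ x (Φ ((p i).realToRCLike ℂ) * c i) (p i x * M + η') := by
    intro i
    by_cases hx : x ∈ tsupport (p i)
    · have h0 : 0 ≤ p i x := hp0 i x
      simpa [abs_of_nonneg h0] using (hc i x hx).mul ((p i).realToRCLike ℂ) hη'
    · refine (NormLENear.mul_of_notMem_tsupport fun hx' => hx ?_).mono ?_
      · exact tsupport_comp_subset (g := ((↑) : ℝ → ℂ)) Complex.ofReal_zero (p i) hx'
      · simpa [image_eq_zero_of_notMem_tsupport hx] using hη'.le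
  refine (NormLENear.sum fun i _ => hterm i).mono ?_
  have hpx : ∑ i, p i x = 1 := by simpa using congr($hp1 x)
  rw [Finset.sum_add_distrib, ← Finset.sum_mul, hpx, one_mul, Finset.sum_const, Finset.card_univ,
    nsmul_eq_mul]
  gcongr
  rw [mul_div_assoc', div_le_iff₀ (by positivity)]
  linarith

end LocalNorm

theorem exists_finset_sum_eq_one_tsupport_subset [CompactSpace X] [T2Space X] {U : X → Set X}
    (hUo : ∀ x, IsOpen (U x)) (hxU : ∀ x, x ∈ U x) :
    ∃ (s : Finset X) (p : s → C(X, ℝ)),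
      (∀ i, 0 ≤ p i) ∧ ∑ i, p i = 1 ∧ ∀ i, tsupport (p i) ⊆ U i := by
  obtain ⟨s, hs⟩ :=
    isCompact_univ.elim_finite_subcover U hUo fun x _ => mem_iUnion.2 ⟨x, hxU x⟩
  obtain ⟨p, hp⟩ := PartitionOfUnity.exists_isSubordinate isClosed_univ (fun i : s => U i)
    (fun i => hUo i) (by simpa [iUnion_subtype] using hs)
  refine ⟨s, fun i => p i, fun i x => p.nonneg i x, ?_, hp⟩
  ext x
  simpa [finsum_eq_sum_of_fintype] using p.sum_eq_one (mem_univ x)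

theorem mem_closure_of_forall_sub_mem_vanishingSubmodule [CompactSpace X] [T2Space X]
    [CStarAlgebra A] {Φ : C(X, ℂ) →⋆ₐ[ℂ] A} (hΦ : ∀ f a, Commute (Φ f) a) {S : Type*}
    [SetLike S A] [AddSubmonoidClass S A] {B : S} (hB : ∀ f b, b ∈ B → Φ f * b ∈ B) {a : A}
    (ha : ∀ x, ∃ b ∈ B, a - b ∈ vanishingSubmodule Φ x) : a ∈ closure (B : Set A) := by
  choose b hbB hb using ha
  refine Metric.mem_closure_iff.2 fun ε hε => ?_
  have hlocal : ∀ x, ∃ U, IsOpen U ∧ x ∈ U ∧ LocalNormLE Φ U (a - b x) (ε / 2) := fun x => by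
    obtain ⟨U, hU, hUab⟩ := eventually_smallSets.1 (hb x (ε / 2) (by positivity))
    exact ⟨interior U, isOpen_interior, mem_interior_iff_mem_nhds.2 hU, hUab _ interior_subset⟩
  choose U hUo hxU hU using hlocal
  obtain ⟨s, p, hp0, hp1, hpU⟩ := exists_finset_sum_eq_one_tsupport_subset hUo hxU
  have hΦp : ∑ i, Φ ((p i).realToRCLike ℂ) = 1 := by
    rw [← map_sum, ← map_one Φ]
    congr 1
    ext x
    simpa using congr(($hp1 x : ℂ))
  refine ⟨∑ i, Φ ((p i).realToRCLike ℂ) * b i, sum_mem fun i _ => hB _ _ (hbB i), ?_⟩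
  have hab : a - ∑ i, Φ ((p i).realToRCLike ℂ) * b i =
      ∑ i, Φ ((p i).realToRCLike ℂ) * (a - b i) := by
    simp only [mul_sub, Finset.sum_sub_distrib, ← Finset.sum_mul, hΦp, one_mul]
  rw [dist_eq_norm, hab]
  refine (norm_sum_partition_mul_le hΦ hp0 hp1 (by positivity) fun i x hx => ?_).trans_lt
    (half_lt_self hε)
  exact (hU i).normLENear ((hUo i).mem_nhds (hpU i hx))

end

/-- let `X` be compact Hausdorff, `A` a unital C*-algebra containing `C(X)` in
its centre (via a unital *-homomorphism `Φ : C(X) → A` with central range), and `B ⊆ A` a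
closed `C(X)`-invariant *-subalgebra such that for every `x ∈ X` the images of `B` and `A` in
the fibre `A_x = A/(C₀(X∖{x})·A)` coincide (i.e. every `a ∈ A` agrees with some `b ∈ B`
modulo the closed ideal `I_x` generated by `{Φ(f)a : f(x) = 0}`).  Then `B = A`. -/
theorem stmt_18 (X A : Type*) [TopologicalSpace X] [CompactSpace X] [T2Space X]
    [NormedRing A] [StarRing A] [CStarRing A] [NormedAlgebra ℂ A]
    [CompleteSpace A] [StarModule ℂ A]
    (Φ : C(X, ℂ) →⋆ₐ[ℂ] A)
    (hcentral : ∀ (f : C(X, ℂ)) (a : A), Φ f * a = a * Φ f)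
    (B : StarSubalgebra ℂ A) (hBclosed : IsClosed (B : Set A))
    (hBinv : ∀ (f : C(X, ℂ)) (b : A), b ∈ B → Φ f * b ∈ B)
    (hfibre : ∀ (x : X) (a : A), ∃ b ∈ B, a - b ∈
      closure ((Submodule.span ℂ
        {z : A | ∃ (f : C(X, ℂ)) (a' : A), f x = 0 ∧ z = Φ f * a'} : Submodule ℂ A) : Set A)) :
    ∀ a : A, a ∈ B := by
  let _ : CStarAlgebra A := {}
  intro a
  refine hBclosed.closure_subset
    (mem_closure_of_forall_sub_mem_vanishingSubmodule hcentral hBinv fun x => ?_)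
  obtain ⟨b, hb, hab⟩ := hfibre x a
  exact ⟨b, hb, closure_span_le_vanishingSubmodule x hab⟩
end
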